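/- arXiv:1006.4273 — 6 statements merged into one kernel-verified Lean document; each statement's English description precedes it below -/
import Mathlib

section
/- Let n ≥ 1, let φ ∈ ℝⁿ be nonzero, let C be a symmetric n×n real matrix, and let B be an n×(n−1) real matrix with Bᵀ B = I_{n−1} and Bᵀ φ = 0 (so the columns of B form an orthonormal basis of the hyperplane φ⊥ = {x ∈ ℝⁿ : φᵀ x = 0}). Assume that the (n−1)×(n−1) matrix Bᵀ C B is invertible (i.e., the bilinear form defined by C is nondegenerate on φ⊥). Then det [[0, φᵀ],[φ, C]] = −(φᵀ φ) · det(Bᵀ C B). -/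
/-!
Let `Q = [φ | B]`, so that `Qᵀ Q = diag(φᵀφ, I)`. Conjugating the bordered matrix
`M = [[0, φᵀ], [φ, C]]` by `diag(1, Q)` gives the bordered matrix with border `Qᵀ φ = (φᵀφ) e₁`
and core `Qᵀ C Q`, whose lower right block is `Bᵀ C B`. A border with a single nonzero entry `a`
contributes `-a²` to the determinant and deletes the first row and column of the core, so
`(φᵀφ) · det M = -(φᵀφ)² · det (Bᵀ C B)`, and we cancel `φᵀφ ≠ 0`.
-/

open Matrix

namespace Matrix

variable {R : Type*} [CommRing R]

def bordered {m : Type*} (w : m → R) (A : Matrix m m R) : Matrix (Fin 1 ⊕ m) (Fin 1 ⊕ m) R :=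
  fromBlocks 0 (replicateRow (Fin 1) w) (replicateCol (Fin 1) w) A

theorem det_transpose_mul_mul_of_card_eq {ι κ : Type*} [Fintype ι] [Fintype κ] [DecidableEq ι]
    [DecidableEq κ] (h : Fintype.card ι = Fintype.card κ) (M : Matrix ι ι R) (P : Matrix ι κ R) :
    (Pᵀ * M * P).det = (Pᵀ * P).det * M.det := by
  obtain e := Fintype.equivOfCardEq h
  have hconj : ∀ N : Matrix ι ι R, Pᵀ * N * P =
      ((P.submatrix id e)ᵀ * N * P.submatrix id e).submatrix e.symm e.symm := by
    intro N
    rw [submatrix_mul _ _ _ id _ Function.bijective_id,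
      submatrix_mul _ _ _ id _ Function.bijective_id, transpose_submatrix]
    simp
  have hgram := hconj 1
  simp only [Matrix.mul_one] at hgram
  rw [hconj M, hgram, det_submatrix_equiv_self, det_submatrix_equiv_self, det_mul, det_mul,
    det_mul]
  ring

theorem transpose_mul_bordered_mul {ι κ : Type*} [Fintype ι] (w : ι → R) (A : Matrix ι ι R)
    (Q : Matrix ι κ R) :
    (fromBlocks (1 : Matrix (Fin 1) (Fin 1) R) 0 0 Q)ᵀ * bordered w A *
        fromBlocks (1 : Matrix (Fin 1) (Fin 1) R) 0 0 Q =
      bordered (Qᵀ *ᵥ w) (Qᵀ * A * Q) := by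
  simp only [bordered, fromBlocks_transpose, fromBlocks_multiply]
  simp [mulVec_transpose, replicateRow_vecMul, ← transpose_replicateRow, ← transpose_mul,
    Matrix.mul_assoc]

theorem det_bordered_sumElim_fromBlocks {m : Type*} [Fintype m] [DecidableEq m] (a : R)
    (A₁₁ : Matrix (Fin 1) (Fin 1) R) (A₁₂ : Matrix (Fin 1) m R) (A₂₁ : Matrix m (Fin 1) R)
    (A₂₂ : Matrix m m R) :
    (bordered (Sum.elim (fun _ => a) 0) (fromBlocks A₁₁ A₁₂ A₂₁ A₂₂)).det = -(a ^ 2 * A₂₂.det) := by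
  set N := bordered (Sum.elim (fun _ => a) 0) (fromBlocks A₁₁ A₁₂ A₂₁ A₂₂)
  set σ : Equiv.Perm (Fin 1 ⊕ (Fin 1 ⊕ m)) := Equiv.swap (.inl 0) (.inr (.inl 0))
  -- swapping the first two rows makes `N` block triangular, twice over
  have hswap : N.submatrix σ id =
      fromBlocks (of fun _ _ => a) (fromCols A₁₁ A₁₂) 0 (fromBlocks (of fun _ _ => a) 0 A₂₁ A₂₂) := by
    ext (i | i | i) (j | j | j) <;>
      simp [N, σ, bordered, Equiv.swap_apply_def, Fin.fin_one_eq_zero]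
  have hsign : Equiv.Perm.sign σ = -1 := Equiv.Perm.sign_swap (by simp)
  have hdet := det_permute σ N
  rw [hswap, hsign, det_fromBlocks_zero₂₁, det_fromBlocks_zero₁₂] at hdet
  simp only [det_unique, Fin.default_eq_zero, of_apply, Units.val_neg, Units.val_one,
    Int.cast_neg, Int.cast_one, neg_mul, one_mul] at hdet
  linear_combination hdet

end Matrix

theorem stmt_1_general (n : ℕ) (hn : 1 ≤ n) (φ : Fin n → ℝ) (hφ : φ ≠ 0)
    (C : Matrix (Fin n) (Fin n) ℝ)
    (B : Matrix (Fin n) (Fin (n - 1)) ℝ)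
    (hB_orth : Bᵀ * B = 1) (hB_perp : Bᵀ *ᵥ φ = 0) :
    (Matrix.fromBlocks (0 : Matrix (Fin 1) (Fin 1) ℝ)
        (Matrix.replicateRow (Fin 1) φ) (Matrix.replicateCol (Fin 1) φ) C).det
      = -((φ ⬝ᵥ φ) * (Bᵀ * C * B).det) := by
  change (bordered φ C).det = _
  set s := φ ⬝ᵥ φ
  have hs : s ≠ 0 := fun h => hφ (dotProduct_self_eq_zero.mp h)
  have hφB : φ ᵥ* B = 0 := by rw [← mulVec_transpose, hB_perp]
  set Q : Matrix (Fin n) (Fin 1 ⊕ Fin (n - 1)) ℝ := fromCols (replicateCol (Fin 1) φ) B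
  have hQφ : Qᵀ *ᵥ φ = Sum.elim (fun _ => s) 0 := by
    rw [transpose_fromCols, fromRows_mulVec, transpose_replicateCol, replicateRow_mulVec_eq_const,
      hB_perp]
    rfl
  have hQCQ : Qᵀ * C * Q = fromBlocks (replicateRow (Fin 1) φ * C * replicateCol (Fin 1) φ)
      (replicateRow (Fin 1) φ * C * B) (Bᵀ * C * replicateCol (Fin 1) φ) (Bᵀ * C * B) := by
    simp [Q, transpose_fromCols, fromRows_mul]
  have hQQ : Qᵀ * Q = fromBlocks (of fun _ _ => s) 0 0 1 := by
    rw [transpose_fromCols, fromRows_mul_fromCols, transpose_replicateCol,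
      replicateRow_mul_replicateCol, ← replicateRow_vecMul, hφB, hB_orth, ← transpose_replicateRow,
      ← transpose_mul, ← replicateRow_vecMul, hφB]
    simp [s]
  set P := fromBlocks (1 : Matrix (Fin 1) (Fin 1) ℝ) 0 0 Q
  have hPP : (Pᵀ * P).det = s := by
    simp [P, fromBlocks_transpose, fromBlocks_multiply, det_fromBlocks_zero₂₁, hQQ]
  have hcard : Fintype.card (Fin 1 ⊕ Fin n) = Fintype.card (Fin 1 ⊕ (Fin 1 ⊕ Fin (n - 1))) := by
    simp only [Fintype.card_sum, Fintype.card_fin]; omega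
  have key := det_transpose_mul_mul_of_card_eq hcard (bordered φ C) P
  rw [transpose_mul_bordered_mul, hQφ, hQCQ, det_bordered_sumElim_fromBlocks, hPP] at key
  apply mul_left_cancel₀ hs
  linear_combination -key

theorem stmt_1 (n : ℕ) (hn : 1 ≤ n) (φ : Fin n → ℝ) (hφ : φ ≠ 0)
    (C : Matrix (Fin n) (Fin n) ℝ) (hsymm : C.IsSymm)
    (B : Matrix (Fin n) (Fin (n - 1)) ℝ)
    (hB_orth : Bᵀ * B = 1) (hB_perp : Bᵀ *ᵥ φ = 0)
    (hinv : IsUnit (Bᵀ * C * B).det) :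
    (Matrix.fromBlocks (0 : Matrix (Fin 1) (Fin 1) ℝ)
        (Matrix.replicateRow (Fin 1) φ) (Matrix.replicateCol (Fin 1) φ) C).det
      = -((φ ⬝ᵥ φ) * (Bᵀ * C * B).det) :=
  stmt_1_general n hn φ hφ C B hB_orth hB_perp
end

section
/- Let n ≥ 1, let C be a symmetric positive definite n×n real matrix, let φ ∈ ℝⁿ be nonzero, and let B be an n×(n−1) real matrix with Bᵀ B = I_{n−1} and Bᵀ φ = 0 (so the columns of B form an orthonormal basis of the hyperplane φ⊥ = {x ∈ ℝⁿ : φᵀ x = 0}). Then (φᵀ C⁻¹ φ) · det(C) = (φᵀ φ) · det(Bᵀ C B). -/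
/-!
Complete an orthonormal basis `B` of `φ⊥` by `φ` itself to a square matrix `N = [B | φ]`.
Then `Nᵀ N = diag(1, …, 1, φᵀφ)`, so `(det N)² = φᵀφ` and the last row of `adj N` is
`(det N / φᵀφ) φ`. The last diagonal entry of `adj (Nᵀ C N) = adj N · adj C · (adj N)ᵀ` is on the
one hand the minor `det (Bᵀ C B)`, and on the other hand `φᵀ adj(C) φ / φᵀφ`; finally
`adj C = det C · C⁻¹`.
-/

open Matrix

namespace Matrix

section snocCol

variable {ι R : Type*} {m : ℕ}

def snocCol (B : Matrix ι (Fin m) R) (v : ι → R) : Matrix ι (Fin (m + 1)) R :=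
  of fun i => Fin.snoc (B i) (v i)

@[simp]
theorem snocCol_apply_castSucc (B : Matrix ι (Fin m) R) (v : ι → R) (i : ι) (j : Fin m) :
    snocCol B v i j.castSucc = B i j := by
  simp [snocCol]

@[simp]
theorem snocCol_apply_last (B : Matrix ι (Fin m) R) (v : ι → R) (i : ι) :
    snocCol B v i (Fin.last m) = v i := by
  simp [snocCol]

theorem submatrix_castSucc_snocCol (B : Matrix ι (Fin m) R) (v : ι → R) :
    (snocCol B v).submatrix id Fin.castSucc = B := by
  ext; simp

variable [Fintype ι] [CommRing R]

theorem submatrix_castSucc_transpose_snocCol_mul_mul (B : Matrix ι (Fin m) R) (v : ι → R)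
    (X : Matrix ι ι R) :
    ((snocCol B v)ᵀ * X * snocCol B v).submatrix Fin.castSucc Fin.castSucc = Bᵀ * X * B := by
  rw [submatrix_mul _ _ _ id _ Function.bijective_id, submatrix_mul _ _ _ id _ Function.bijective_id,
    ← transpose_submatrix, submatrix_castSucc_snocCol, submatrix_id_id]

theorem transpose_snocCol_mul_snocCol {B : Matrix ι (Fin m) R} {v : ι → R}
    (hB : Bᵀ * B = 1) (hv : Bᵀ *ᵥ v = 0) :
    (snocCol B v)ᵀ * snocCol B v = diagonal (Fin.snoc 1 (v ⬝ᵥ v)) := by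
  have hv' : ∀ k, ∑ r, B r k * v r = 0 := fun k => by
    simpa [mulVec, dotProduct] using congr_fun hv k
  ext i j
  induction i using Fin.lastCases <;> induction j using Fin.lastCases
  · simp [mul_apply, dotProduct]
  · simp [mul_apply, mul_comm, hv', (Fin.castSucc_lt_last _).ne']
  · simp [mul_apply, hv']
  · simpa [mul_apply, diagonal_apply, one_apply] using congr_fun (congr_fun hB _) _

theorem vecMul_snocCol {B : Matrix ι (Fin m) R} {v : ι → R}
    (hB : Bᵀ * B = 1) (hv : Bᵀ *ᵥ v = 0) :
    v ᵥ* snocCol B v = Pi.single (Fin.last m) (v ⬝ᵥ v) := by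
  have hrow : (snocCol B v)ᵀ (Fin.last m) = v := by ext; simp
  calc v ᵥ* snocCol B v = (snocCol B v)ᵀ (Fin.last m) ᵥ* snocCol B v := by rw [hrow]
    _ = Pi.single (Fin.last m) (v ⬝ᵥ v) := by
      rw [← mul_apply_eq_vecMul, transpose_snocCol_mul_snocCol hB hv]
      ext j
      simp [diagonal_apply, Pi.single_apply, eq_comm]

end snocCol

theorem adjugate_apply_last_last {R : Type*} [CommRing R] {m : ℕ}
    (X : Matrix (Fin (m + 1)) (Fin (m + 1)) R) :
    adjugate X (Fin.last m) (Fin.last m) = det (X.submatrix Fin.castSucc Fin.castSucc) := by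
  simp [adjugate_fin_succ_eq_det_submatrix, ← two_mul, pow_mul]

theorem dotProduct_inv_mulVec_mul_det {ι R : Type*} [Fintype ι] [DecidableEq ι] [CommRing R]
    {A : Matrix ι ι R} (hA : IsUnit A.det) (v w : ι → R) :
    (v ⬝ᵥ (A⁻¹ *ᵥ w)) * A.det = v ⬝ᵥ (adjugate A *ᵥ w) := by
  rw [mul_comm, ← smul_eq_mul, ← dotProduct_smul,
    det_smul_inv_mulVec_eq_cramer _ _ hA, cramer_eq_adjugate_mulVec]

theorem dotProduct_adjugate_mulVec_eq_mul_det {K : Type*} [Field K] {m : ℕ}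
    (C : Matrix (Fin (m + 1)) (Fin (m + 1)) K) {B : Matrix (Fin (m + 1)) (Fin m) K}
    {φ : Fin (m + 1) → K} (hB : Bᵀ * B = 1) (hφB : Bᵀ *ᵥ φ = 0) (hφ : φ ⬝ᵥ φ ≠ 0) :
    φ ⬝ᵥ (adjugate C *ᵥ φ) = (φ ⬝ᵥ φ) * det (Bᵀ * C * B) := by
  set N := snocCol B φ
  set c := φ ⬝ᵥ φ
  have hdetN : det N * det N = c := by
    simpa [det_diagonal, Fin.prod_univ_castSucc] using
      congr_arg det (transpose_snocCol_mul_snocCol hB hφB)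
  have hN : IsUnit N := (isUnit_iff_isUnit_det N).2 (left_ne_zero_of_mul (hdetN ▸ hφ)).isUnit
  set v := adjugate N (Fin.last m)
  have hv : c • v = det N • φ := by
    apply vecMul_injective_of_isUnit hN
    beta_reduce
    have hvN : v ᵥ* N = det N • Pi.single (Fin.last m) 1 := by
      rw [← mul_apply_eq_vecMul, adjugate_mul]
      ext j; simp [one_apply, Pi.single_apply, eq_comm]
    rw [smul_vecMul, smul_vecMul, hvN, vecMul_snocCol hB hφB, smul_smul, mul_comm,
      ← smul_smul, ← Pi.single_smul, smul_eq_mul, mul_one]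
  have hdet : det (Bᵀ * C * B) = v ⬝ᵥ (adjugate C *ᵥ v) := by
    rw [← submatrix_castSucc_transpose_snocCol_mul_mul B φ C, ← adjugate_apply_last_last,
      adjugate_mul_distrib, adjugate_mul_distrib, ← adjugate_transpose, ← Matrix.mul_assoc,
      mul_mul_apply, transpose_transpose]
  have key : c * (c * det (Bᵀ * C * B)) = c * (φ ⬝ᵥ (adjugate C *ᵥ φ)) := by
    calc c * (c * det (Bᵀ * C * B)) = (c • v) ⬝ᵥ (adjugate C *ᵥ (c • v)) := by
          rw [hdet, mulVec_smul, dotProduct_smul, smul_dotProduct, smul_eq_mul, smul_eq_mul,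
            mul_left_comm]
      _ = (det N * det N) * (φ ⬝ᵥ (adjugate C *ᵥ φ)) := by
          rw [hv, mulVec_smul, dotProduct_smul, smul_dotProduct, smul_eq_mul, smul_eq_mul,
            mul_left_comm, mul_assoc]
      _ = c * (φ ⬝ᵥ (adjugate C *ᵥ φ)) := by rw [hdetN]
  exact (mul_left_cancel₀ hφ key).symm

end Matrix

theorem stmt_2 (n : ℕ) (hn : 1 ≤ n)
    (C : Matrix (Fin n) (Fin n) ℝ) (hC : C.PosDef)
    (φ : Fin n → ℝ) (hφ : φ ≠ 0)
    (B : Matrix (Fin n) (Fin (n - 1)) ℝ)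
    (hB_orth : Bᵀ * B = 1) (hB_perp : Bᵀ *ᵥ φ = 0) :
    (φ ⬝ᵥ (C⁻¹ *ᵥ φ)) * C.det = (φ ⬝ᵥ φ) * (Bᵀ * C * B).det := by
  obtain ⟨m, rfl⟩ := Nat.exists_eq_add_of_le' hn
  have hφφ : φ ⬝ᵥ φ ≠ 0 := mt dotProduct_self_eq_zero.mp hφ
  rw [dotProduct_inv_mulVec_mul_det hC.det_pos.ne'.isUnit]
  exact dotProduct_adjugate_mulVec_eq_mul_det C hB_orth hB_perp hφφ
end

section
/- Let n ≥ 1, let φ ∈ ℂⁿ, let C be an invertible n×n complex matrix, and let z ∈ ℂ be nonzero. Then det [[0, φᵀ],[φ, z·(φ φᵀ + C)]] = −z^{n−1} · (φᵀ C⁻¹ φ) · det(C), where φ φᵀ is the rank-one n×n matrix with entries φᵢ φⱼ. -/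
/-!
Subtracting `z φⱼ` times the first column from column `j` turns the lower right block
`z (φ φᵀ + C)` into `z C` without changing the determinant. The resulting bordered matrix is
expanded by the Schur complement of the invertible block `z C`, which gives
`det [[0, uᵀ], [v, A]] = -(uᵀ adj(A) v)`; finally `adj(z C) = z^(n-1) adj(C)` and
`adj(C) = det(C) C⁻¹`.
-/

open Matrix

namespace Matrix

variable {ι m n R : Type*} [Fintype m] [Fintype n] [DecidableEq m] [DecidableEq n] [CommRing R]

theorem dotProduct_adjugate_mulVec (u v : n → R) {A : Matrix n n R} (hA : IsUnit A.det) :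
    u ⬝ᵥ adjugate A *ᵥ v = A.det * (u ⬝ᵥ A⁻¹ *ᵥ v) := by
  rw [← cramer_eq_adjugate_mulVec, ← det_smul_inv_mulVec_eq_cramer _ _ hA, dotProduct_smul,
    smul_eq_mul]

theorem det_fromBlocks_zero₁₁_mul_add (B : Matrix m n R) (C : Matrix n m R) (D : Matrix n n R)
    (X : Matrix m n R) :
    (fromBlocks 0 B C (C * X + D)).det = (fromBlocks 0 B C D).det := by
  have hcolumnOp : fromBlocks 0 B C (C * X + D) = fromBlocks 0 B C D * fromBlocks 1 X 0 1 := by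
    simp [fromBlocks_multiply]
  rw [hcolumnOp, det_mul, det_fromBlocks_zero₂₁, det_one, det_one, mul_one, mul_one]

theorem det_fromBlocks_zero₁₁_replicateRow_replicateCol [Unique ι] [Fintype ι] [DecidableEq ι] (u v : n → R)
    {A : Matrix n n R} (hA : IsUnit A.det) :
    (fromBlocks 0 (replicateRow ι u) (replicateCol ι v) A).det = -(u ⬝ᵥ adjugate A *ᵥ v) := by
  let := A.invertibleOfIsUnitDet hA
  have hschur : replicateRow ι u * ⅟A * replicateCol ι v =
      replicateRow ι u * replicateCol ι (A⁻¹ *ᵥ v) := by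
    rw [Matrix.mul_assoc, invOf_eq_nonsing_inv, replicateCol_mulVec]
  rw [det_fromBlocks₂₂, hschur, zero_sub, det_unique (-_), neg_apply,
    replicateRow_mul_replicateCol_apply, dotProduct_adjugate_mulVec _ _ hA, mul_neg]

end Matrix

theorem stmt_3_general (n : ℕ) (φ : Fin n → ℂ)
    (C : Matrix (Fin n) (Fin n) ℂ) (hinv : IsUnit C.det)
    (z : ℂ) (hz : z ≠ 0) :
    (Matrix.fromBlocks (0 : Matrix (Fin 1) (Fin 1) ℂ)
        (Matrix.replicateRow (Fin 1) φ) (Matrix.replicateCol (Fin 1) φ)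
        (z • (Matrix.vecMulVec φ φ + C))).det
      = -(z ^ (n - 1) * (φ ⬝ᵥ (C⁻¹ *ᵥ φ)) * C.det) := by
  have hblock : z • (vecMulVec φ φ + C) =
      replicateCol (Fin 1) φ * (z • replicateRow (Fin 1) φ) + z • C := by
    rw [smul_add, vecMulVec_eq (Fin 1), Matrix.mul_smul]
    rfl -- `vecMulVec_eq` uses the `Fintype (Fin 1)` instance derived from `Unique`
  have hzC : IsUnit (z • C).det := by
    rw [det_smul]
    exact (hz.isUnit.pow _).mul hinv
  rw [hblock, det_fromBlocks_zero₁₁_mul_add,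
    det_fromBlocks_zero₁₁_replicateRow_replicateCol _ _ hzC, adjugate_smul, Fintype.card_fin,
    smul_mulVec, dotProduct_smul, dotProduct_adjugate_mulVec _ _ hinv, smul_eq_mul]
  ring

theorem stmt_3 (n : ℕ) (hn : 1 ≤ n) (φ : Fin n → ℂ)
    (C : Matrix (Fin n) (Fin n) ℂ) (hinv : IsUnit C.det)
    (z : ℂ) (hz : z ≠ 0) :
    (Matrix.fromBlocks (0 : Matrix (Fin 1) (Fin 1) ℂ)
        (Matrix.replicateRow (Fin 1) φ) (Matrix.replicateCol (Fin 1) φ)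
        (z • (Matrix.vecMulVec φ φ + C))).det
      = -(z ^ (n - 1) * (φ ⬝ᵥ (C⁻¹ *ᵥ φ)) * C.det) :=
  stmt_3_general n φ C hinv z hz
end

section
/- Let p, q ≥ 1 be natural numbers and set n = p + q. Then the sequence k ↦ k^{−1/2} · ((k·n + 1)! / ((k·p)! · (k·q)!)) · (p/n)^{k·p} · (q/n)^{k·q} converges, as k → ∞, to n^{3/2} / √(2·π·p·q). -/
/-!
By Stirling, `m! ~ σ(m) := √(2πm) (m/e)^m`. Replacing the three factorials by `σ` changes
the sequence only by a factor tending to `1`, and after this replacement it is eventually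
constant: with `a = kp`, `b = kq`, the exponential parts cancel exactly,
`((a+b)/e)^(a+b) (a/(a+b))^a (b/(a+b))^b = (a/e)^a (b/e)^b`, leaving
`k^(-1/2) · kn · √(kn / (2π · kp · kq)) = n^(3/2) / √(2πpq)`.
-/

open Filter Asymptotics Real Nat

noncomputable def stirlingApprox (m : ℕ) : ℝ := √(2 * m * π) * (m / exp 1) ^ m

lemma factorial_succ_isEquivalent_mul_stirlingApprox :
    (fun m : ℕ => ((m + 1)! : ℝ)) ~[atTop] fun m => m * stirlingApprox m := by
  have hsucc : (fun m : ℕ => (m : ℝ) + 1) ~[atTop] fun m => (m : ℝ) :=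
    IsEquivalent.refl.add_const_of_norm_tendsto_atTop
      (tendsto_norm_atTop_atTop.comp tendsto_natCast_atTop_atTop)
  refine (hsucc.mul Stirling.factorial_isEquivalent_stirling).congr_left (.of_forall fun m => ?_)
  push_cast [Nat.factorial_succ]
  rfl

lemma factorial_mul_isEquivalent_stirlingApprox {m : ℕ} (hm : 0 < m) :
    (fun k : ℕ => ((k * m)! : ℝ)) ~[atTop] fun k => stirlingApprox (k * m) :=
  Stirling.factorial_isEquivalent_stirling.comp_tendsto (tendsto_id.atTop_mul_const' hm)

lemma factorial_mul_succ_isEquivalent {m : ℕ} (hm : 0 < m) :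
    (fun k : ℕ => ((k * m + 1)! : ℝ)) ~[atTop] fun k => (k * m : ℕ) * stirlingApprox (k * m) :=
  factorial_succ_isEquivalent_mul_stirlingApprox.comp_tendsto (tendsto_id.atTop_mul_const' hm)

lemma stirlingApprox_add_div_mul_pow_mul_pow {a b : ℕ} (ha : a ≠ 0) (hb : b ≠ 0) :
    stirlingApprox (a + b) / (stirlingApprox a * stirlingApprox b) *
        ((a : ℝ) / (a + b)) ^ a * ((b : ℝ) / (a + b)) ^ b =
      √((a + b) / (2 * π * a * b)) := by
  have hpow : (((a + b : ℕ) : ℝ) / exp 1) ^ (a + b) * ((a : ℝ) / (a + b)) ^ a *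
      ((b : ℝ) / (a + b)) ^ b = ((a : ℝ) / exp 1) ^ a * ((b : ℝ) / exp 1) ^ b := by
    calc _ = ((a + b) / exp 1 * (a / (a + b))) ^ a * ((a + b) / exp 1 * (b / (a + b))) ^ b := by
          push_cast; rw [mul_pow, mul_pow, pow_add]; ring
      _ = _ := by congr 2 <;> field_simp
  have hsqrt : √(2 * ((a + b : ℕ) : ℝ) * π) / (√(2 * a * π) * √(2 * b * π)) =
      √((a + b) / (2 * π * a * b)) := by
    rw [← sqrt_mul (by positivity), ← sqrt_div (by positivity)]
    congr 1
    push_cast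
    field_simp
  have : ((a : ℝ) / exp 1) ^ a * ((b : ℝ) / exp 1) ^ b ≠ 0 := by positivity
  calc _ = √(2 * ((a + b : ℕ) : ℝ) * π) / (√(2 * a * π) * √(2 * b * π)) *
        ((((a + b : ℕ) : ℝ) / exp 1) ^ (a + b) * ((a : ℝ) / (a + b)) ^ a *
          ((b : ℝ) / (a + b)) ^ b / (((a : ℝ) / exp 1) ^ a * ((b : ℝ) / exp 1) ^ b)) := by
        unfold stirlingApprox; push_cast; ring
    _ = _ := by rw [hpow, div_self this, mul_one, hsqrt]

lemma rpow_neg_half_mul_mul_sqrt {k p q : ℝ} (hk : 0 < k) (hp : 0 < p) (hq : 0 < q) :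
    k ^ (-(1 / 2 : ℝ)) * (k * p + k * q) * √((k * p + k * q) / (2 * π * (k * p) * (k * q))) =
      (p + q) ^ ((3 : ℝ) / 2) / √(2 * π * p * q) := by
  have hsplit : (k * p + k * q) / (2 * π * (k * p) * (k * q)) =
      (p + q) / (k * (2 * π * p * q)) := by
    field_simp
  rw [hsplit, sqrt_div (by positivity), sqrt_mul hk.le, rpow_neg hk.le, ← sqrt_eq_rpow,
    show (3 : ℝ) / 2 = 1 + 1 / 2 by norm_num, rpow_add (by positivity), rpow_one, ← sqrt_eq_rpow]
  have : 0 < √k := sqrt_pos.mpr hk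
  have : 0 < √(2 * π * p * q) := sqrt_pos.mpr (by positivity)
  field_simp
  rw [sq_sqrt hk.le]

lemma rpow_neg_half_mul_stirlingApprox_ratio_eq {k p q : ℕ} (hk : k ≠ 0) (hp : p ≠ 0)
    (hq : q ≠ 0) :
    (k : ℝ) ^ (-(1 / 2 : ℝ)) *
        ((k * (p + q) : ℕ) * stirlingApprox (k * (p + q)) /
          (stirlingApprox (k * p) * stirlingApprox (k * q))) *
        ((p : ℝ) / ((p + q : ℕ) : ℝ)) ^ (k * p) * ((q : ℝ) / ((p + q : ℕ) : ℝ)) ^ (k * q) =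
      ((p + q : ℕ) : ℝ) ^ ((3 : ℝ) / 2) / √(2 * π * p * q) := by
  have hratio : ∀ r : ℕ, (r : ℝ) / ((p + q : ℕ) : ℝ) =
      ((k * r : ℕ) : ℝ) / ((k * p : ℕ) + (k * q : ℕ)) := fun r => by
    push_cast
    rw [← mul_add, mul_div_mul_left _ _ (Nat.cast_ne_zero.mpr hk)]
  calc _ = (k : ℝ) ^ (-(1 / 2 : ℝ)) * ((k * p + k * q : ℕ) : ℝ) *
        (stirlingApprox (k * p + k * q) / (stirlingApprox (k * p) * stirlingApprox (k * q)) *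
          (((k * p : ℕ) : ℝ) / ((k * p : ℕ) + (k * q : ℕ))) ^ (k * p) *
          (((k * q : ℕ) : ℝ) / ((k * p : ℕ) + (k * q : ℕ))) ^ (k * q)) := by
        rw [hratio p, hratio q, Nat.mul_add]; ring
    _ = _ := by
        rw [stirlingApprox_add_div_mul_pow_mul_pow (mul_ne_zero hk hp) (mul_ne_zero hk hq)]
        push_cast
        exact rpow_neg_half_mul_mul_sqrt (by positivity) (by positivity) (by positivity)

theorem stmt_11 (p q : ℕ) (hp : 1 ≤ p) (hq : 1 ≤ q) (n : ℕ) (hn : n = p + q) :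
    Tendsto
      (fun k : ℕ => (k : ℝ) ^ (-(1 / 2 : ℝ)) *
        ((Nat.factorial (k * n + 1) : ℝ) /
          ((Nat.factorial (k * p) : ℝ) * (Nat.factorial (k * q) : ℝ))) *
        ((p : ℝ) / (n : ℝ)) ^ (k * p) * ((q : ℝ) / (n : ℝ)) ^ (k * q))
      atTop
      (nhds ((n : ℝ) ^ ((3 : ℝ) / 2) / Real.sqrt (2 * Real.pi * (p : ℝ) * (q : ℝ)))) := by
  subst hn
  have hequiv : (fun k : ℕ => (k : ℝ) ^ (-(1 / 2 : ℝ)) *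
        ((k * (p + q) + 1)! / ((k * p)! * (k * q)! : ℝ)) *
        ((p : ℝ) / ((p + q : ℕ) : ℝ)) ^ (k * p) * ((q : ℝ) / ((p + q : ℕ) : ℝ)) ^ (k * q))
      ~[atTop] fun k : ℕ => (k : ℝ) ^ (-(1 / 2 : ℝ)) *
        ((k * (p + q) : ℕ) * stirlingApprox (k * (p + q)) /
          (stirlingApprox (k * p) * stirlingApprox (k * q))) *
        ((p : ℝ) / ((p + q : ℕ) : ℝ)) ^ (k * p) * ((q : ℝ) / ((p + q : ℕ) : ℝ)) ^ (k * q) :=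
    ((IsEquivalent.refl.mul ((factorial_mul_succ_isEquivalent (by omega)).div
      ((factorial_mul_isEquivalent_stirlingApprox hp).mul
        (factorial_mul_isEquivalent_stirlingApprox hq)))).mul IsEquivalent.refl).mul
      IsEquivalent.refl
  refine (hequiv.congr_right ?_).tendsto_nhds_iff.mpr tendsto_const_nhds
  filter_upwards [eventually_ne_atTop 0] with k hk
  exact rpow_neg_half_mul_stirlingApprox_ratio_eq hk (by omega) (by omega)
end

section
/- Let p, q ≥ 1 be natural numbers, set n = p + q, and let x, y be positive real numbers with x + y = 1 and (x, y) ≠ (p/n, q/n). Then for every natural number N, the sequence k ↦ k^N · ((k·n + 1)! / ((k·p)! · (k·q)!)) · x^{k·p} · y^{k·q} tends to 0 as k → ∞. -/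
/-!
Since `(kn+1)!/((kp)! (kq)!) = (kn+1) · C(kn, kp)`, and a single term of the binomial expansion of
`(p/n + q/n)^{kn} = 1` is at most `1`, we get `C(kn, kp) x^{kp} y^{kq} ≤ r^k` with
`r = (nx/p)^p (ny/q)^q`. Strict weighted AM–GM applied to `nx/p ≠ ny/q` with weights `p/n, q/n`
gives `r < 1`, and geometric decay beats the polynomial factor `k^N (kn+1)`.
-/

open Filter

theorem choose_mul_pow_mul_pow_le_add_pow {R : Type*} [CommSemiring R] [PartialOrder R]
    [IsOrderedRing R] {m j : ℕ} (hj : j ≤ m) {u v : R} (hu : 0 ≤ u) (hv : 0 ≤ v) :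
    (m.choose j : R) * u ^ j * v ^ (m - j) ≤ (u + v) ^ m := by
  rw [add_pow]
  refine (le_of_eq (by ring)).trans <|
    Finset.single_le_sum (f := fun i => u ^ i * v ^ (m - i) * (m.choose i : R))
      (fun i _ => by positivity) (Finset.mem_range.2 (Nat.lt_succ_of_le hj))

theorem choose_mul_pow_mul_pow_le_div_pow_mul_div_pow {m j : ℕ} (hj : j ≤ m) {u v x y : ℝ}
    (hu : 0 < u) (hv : 0 < v) (huv : u + v = 1) (hx : 0 ≤ x) (hy : 0 ≤ y) :
    (m.choose j : ℝ) * x ^ j * y ^ (m - j) ≤ (x / u) ^ j * (y / v) ^ (m - j) := by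
  have hbinom := choose_mul_pow_mul_pow_le_add_pow hj hu.le hv.le
  rw [huv, one_pow] at hbinom
  calc (m.choose j : ℝ) * x ^ j * y ^ (m - j)
      = (m.choose j * u ^ j * v ^ (m - j)) * ((x / u) ^ j * (y / v) ^ (m - j)) := by
        rw [div_pow, div_pow]; field_simp
    _ ≤ (x / u) ^ j * (y / v) ^ (m - j) :=
        mul_le_of_le_one_left (by positivity) hbinom

theorem Real.rpow_mul_rpow_lt_one_of_ne {s t a b : ℝ} (hs : 0 < s) (ht : 0 < t)
    (ha : 0 ≤ a) (hb : 0 ≤ b) (hab : a ≠ b) (h : s * a + t * b = s + t) :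
    a ^ s * b ^ t < 1 := by
  have hst : 0 < s + t := by positivity
  have hamgm := (Real.geom_mean_lt_arith_mean2_weighted_iff_of_pos (div_pos hs hst)
    (div_pos ht hst) ha hb (by field_simp)).2 hab
  have hone : s / (s + t) * a + t / (s + t) * b = 1 := by
    field_simp; linarith
  rw [hone] at hamgm
  calc a ^ s * b ^ t = (a ^ (s / (s + t)) * b ^ (t / (s + t))) ^ (s + t) := by
        rw [Real.mul_rpow (by positivity) (by positivity), ← Real.rpow_mul ha,
          ← Real.rpow_mul hb, div_mul_cancel₀ _ hst.ne', div_mul_cancel₀ _ hst.ne']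
    _ < 1 := Real.rpow_lt_one (by positivity) hamgm hst

theorem factorial_succ_add_div_factorial_mul_factorial (a b : ℕ) :
    ((a + b + 1).factorial : ℝ) / (a.factorial * b.factorial) =
      (a + b + 1) * (a + b).choose a := by
  rw [Nat.factorial_succ, Nat.cast_add_choose, Nat.cast_mul, mul_div_assoc]
  push_cast
  ring

theorem div_pow_mul_div_pow_lt_one {p q : ℕ} (hp : 0 < p) (hq : 0 < q) {x y : ℝ}
    (hx : 0 ≤ x) (hy : 0 ≤ y) (hxy : x + y = 1)
    (hne : (x, y) ≠ ((p : ℝ) / (p + q), (q : ℝ) / (p + q))) :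
    (x / (p / (p + q))) ^ p * (y / (q / (p + q))) ^ q < 1 := by
  have hp' : (0 : ℝ) < p := by exact_mod_cast hp
  have hq' : (0 : ℝ) < q := by exact_mod_cast hq
  have hsum : (p : ℝ) * (x / (p / (p + q))) + q * (y / (q / (p + q))) = p + q := by
    field_simp
    exact hxy
  have hab : x / (p / (p + q)) ≠ y / (q / (p + q)) := by
    intro h
    refine hne (Prod.ext ?_ ?_) <;> field_simp at h ⊢ <;> nlinarith
  have := Real.rpow_mul_rpow_lt_one_of_ne hp' hq' (by positivity) (by positivity) hab hsum
  simpa only [Real.rpow_natCast] using this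

theorem tendsto_pow_mul_mul_add_one_mul_pow_of_lt_one (N : ℕ) (c : ℝ) {r : ℝ} (hr₀ : 0 ≤ r)
    (hr₁ : r < 1) :
    Tendsto (fun k : ℕ => (k : ℝ) ^ N * (k * c + 1) * r ^ k) atTop (nhds 0) := by
  have h := ((tendsto_pow_const_mul_const_pow_of_lt_one (N + 1) hr₀ hr₁).const_mul c).add
    (tendsto_pow_const_mul_const_pow_of_lt_one N hr₀ hr₁)
  rw [mul_zero, add_zero] at h
  refine h.congr fun k => ?_
  ring

theorem stmt_12 (p q : ℕ) (hp : 1 ≤ p) (hq : 1 ≤ q) (n : ℕ) (hn : n = p + q)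
    (x y : ℝ) (hx : 0 < x) (hy : 0 < y) (hxy : x + y = 1)
    (hne : (x, y) ≠ ((p : ℝ) / (n : ℝ), (q : ℝ) / (n : ℝ))) :
    ∀ N : ℕ,
      Tendsto
        (fun k : ℕ => (k : ℝ) ^ N *
          ((Nat.factorial (k * n + 1) : ℝ) /
            ((Nat.factorial (k * p) : ℝ) * (Nat.factorial (k * q) : ℝ))) *
          x ^ (k * p) * y ^ (k * q))
        atTop (nhds 0) := by
  intro N
  subst hn
  push_cast at hne
  have hu : (0 : ℝ) < p / (p + q) := by positivity
  have hv : (0 : ℝ) < q / (p + q) := by positivity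
  have huv : (p : ℝ) / (p + q) + q / (p + q) = 1 := by
    rw [← add_div]; exact div_self (by positivity)
  set r := (x / (p / (p + q))) ^ p * (y / (q / (p + q))) ^ q
  have hr : r < 1 := div_pow_mul_div_pow_lt_one hp hq hx.le hy.le hxy hne
  refine squeeze_zero (fun k => by positivity) (fun k => ?_)
    (tendsto_pow_mul_mul_add_one_mul_pow_of_lt_one N (p + q) (by positivity) hr)
  have hchoose : ((k * p + k * q).choose (k * p) : ℝ) * x ^ (k * p) * y ^ (k * q) ≤ r ^ k := by
    have := choose_mul_pow_mul_pow_le_div_pow_mul_div_pow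
      (Nat.le_add_right (k * p) (k * q)) hu hv huv hx.le hy.le
    rw [Nat.add_sub_cancel_left] at this
    exact this.trans_eq (by rw [pow_mul', pow_mul', ← mul_pow])
  rw [mul_add, factorial_succ_add_div_factorial_mul_factorial]
  calc _ = (k : ℝ) ^ N * (k * (p + q) + 1) *
        (((k * p + k * q).choose (k * p) : ℝ) * x ^ (k * p) * y ^ (k * q)) := by
        push_cast; ring
    _ ≤ _ := by gcongr
end

section
/- Let X be a compact topological space and f : X → ℝ a continuous function. If the image f(X) is preconnected and the fiber f⁻¹({c}) is preconnected for every c ∈ ℝ, then X is preconnected. -/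
open Set

/-- A splitting of `X` into two disjoint nonempty closed pieces has closed images covering the
preconnected set `range f`, so both images contain some `y`; the fiber over `y` then meets both
pieces, which contradicts its preconnectedness. -/
theorem IsClosedMap.preconnectedSpace_of_isPreconnected_fibers {X Y : Type*}
    [TopologicalSpace X] [TopologicalSpace Y] {f : X → Y} (hf : IsClosedMap f)
    (hrange : IsPreconnected (range f)) (hfib : ∀ y, IsPreconnected (f ⁻¹' {y})) :
    PreconnectedSpace X := by
  refine ⟨isPreconnected_closed_iff.mpr ?_⟩
  rintro A B hA hB hcover ⟨a, -, ha⟩ ⟨b, -, hb⟩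
  have hcover_range : range f ⊆ f '' A ∪ f '' B := by
    rintro _ ⟨x, rfl⟩
    rcases hcover (mem_univ x) with hx | hx
    exacts [Or.inl (mem_image_of_mem f hx), Or.inr (mem_image_of_mem f hx)]
  obtain ⟨y, -, ⟨a', ha', rfl⟩, ⟨b', hb', hb'a'⟩⟩ :=
    isPreconnected_closed_iff.mp hrange _ _ (hf A hA) (hf B hB) hcover_range
      ⟨f a, mem_range_self a, mem_image_of_mem f ha⟩ ⟨f b, mem_range_self b, mem_image_of_mem f hb⟩
  obtain ⟨x, -, hxAB⟩ := isPreconnected_closed_iff.mp (hfib (f a')) A B hA hB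
    (fun x _ ↦ hcover (mem_univ x)) ⟨a', rfl, ha'⟩ ⟨b', hb'a', hb'⟩
  exact ⟨x, mem_univ x, hxAB⟩

theorem stmt_13 (X : Type*) [TopologicalSpace X] [CompactSpace X]
    (f : X → ℝ) (hf : Continuous f)
    (himg : IsPreconnected (Set.range f))
    (hfib : ∀ c : ℝ, IsPreconnected (f ⁻¹' {c})) :
    PreconnectedSpace X :=
  hf.isClosedMap.preconnectedSpace_of_isPreconnected_fibers himg hfib
end
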